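/- arXiv:2507.07520 — 6 statements merged into one kernel-verified Lean document; each statement's English description precedes it below -/
import Mathlib

section
/- Fix α ∈ [0,1] and z ≥ max{α, 1−α}. Define D̂_{α,z}(p,q,c) := −(1/(z+1)) · log(Σ_{i=1}^n p_i^α q_i^{1−α} c_i^{2z}) for probability vectors p, q ∈ ℝ^n and overlaps c ∈ [0,1]^n with c_i > 0 for some i with p_i q_i > 0. Then as z → ∞ (with α fixed), D̂_{α,z}(p,q,c) converges to D̂^T(p,q,c) := −log(max_i c_i^2), where the maximum is over indices i with p_i^α q_i^{1−α} c_i > 0. -/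
/-!
Put `w i = p i ^ α * q i ^ (1 - α)` and let `j` maximise `c` among the indices with `w i * c i > 0`.
Every term of `∑ i, w i * c i ^ (2 * z)` is at most `w i * c j ^ (2 * z)`, and the sum is at least its
`j`-th term, so `log (w j) ≤ log (∑ i, w i * c i ^ (2 * z)) - z * log (c j ^ 2) ≤ log (∑ i, w i)`.
Dividing by `z + 1` squeezes the normalised logarithm onto `log (c j ^ 2)`.
-/

open Finset Filter Topology

theorem tendsto_add_mul_div_add_one (a L : ℝ) :
    Tendsto (fun z : ℝ => (a + z * L) / (z + 1)) atTop (𝓝 L) := by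
  have hdecay : Tendsto (fun z : ℝ => (a - L) / (z + 1)) atTop (𝓝 0) :=
    tendsto_const_nhds.div_atTop (tendsto_atTop_add_const_right _ 1 tendsto_id)
  refine (by simpa using hdecay.const_add L : Tendsto _ atTop (𝓝 L)).congr' ?_
  filter_upwards [eventually_gt_atTop 0] with z hz
  field_simp
  ring

theorem tendsto_div_add_one_of_le_add_mul {f : ℝ → ℝ} {a b L : ℝ}
    (hlower : ∀ᶠ z in atTop, a + z * L ≤ f z) (hupper : ∀ᶠ z in atTop, f z ≤ b + z * L) :
    Tendsto (fun z => f z / (z + 1)) atTop (𝓝 L) := by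
  refine tendsto_of_tendsto_of_tendsto_of_le_of_le' (tendsto_add_mul_div_add_one a L)
    (tendsto_add_mul_div_add_one b L) ?_ ?_
  · filter_upwards [hlower, eventually_gt_atTop 0] with z hz hpos
    gcongr
  · filter_upwards [hupper, eventually_gt_atTop 0] with z hz hpos
    gcongr

theorem Real.biSup_eq_of_forall_le {ι : Type*} {s : Set ι} {f : ι → ℝ} {j : ι} (hj : j ∈ s)
    (hmax : ∀ i ∈ s, f i ≤ f j) (hnonneg : 0 ≤ f j) : ⨆ i ∈ s, f i = f j := by
  have hle : ∀ i, ⨆ _ : i ∈ s, f i ≤ f j := fun i => Real.iSup_le (hmax i) hnonneg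
  refine le_antisymm (Real.iSup_le hle hnonneg) ?_
  exact le_ciSup_of_le ⟨f j, Set.forall_mem_range.2 hle⟩ j (ciSup_pos (f := fun _ => f j) hj).ge

section LogSumRpow

variable {ι : Type*} [Fintype ι] {w c : ι → ℝ} {j : ι} {t : ℝ}

theorem sum_mul_rpow_le_sum_mul_rpow (hw : ∀ i, 0 ≤ w i) (hc : ∀ i, 0 ≤ c i)
    (hmax : ∀ i, 0 < w i * c i → c i ≤ c j) (ht : 0 < t) :
    ∑ i, w i * c i ^ t ≤ (∑ i, w i) * c j ^ t := by
  rw [Finset.sum_mul]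
  refine Finset.sum_le_sum fun i _ => ?_
  rcases (mul_nonneg (hw i) (hc i)).lt_or_eq with hpos | hzero
  · exact mul_le_mul_of_nonneg_left (Real.rpow_le_rpow (hc i) (hmax i hpos) ht.le) (hw i)
  · rcases mul_eq_zero.1 hzero.symm with hwi | hci
    · simp [hwi]
    · rw [hci, Real.zero_rpow ht.ne', mul_zero]
      exact mul_nonneg (hw i) (Real.rpow_nonneg (hc j) t)

theorem log_sum_mul_rpow_le (hw : ∀ i, 0 ≤ w i) (hc : ∀ i, 0 ≤ c i) (hj : 0 < w j * c j)
    (hmax : ∀ i, 0 < w i * c i → c i ≤ c j) (ht : 0 < t) :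
    Real.log (∑ i, w i * c i ^ t) ≤ Real.log (∑ i, w i) + t * Real.log (c j) := by
  have hwj := pos_of_mul_pos_left hj (hc j)
  have hcj := pos_of_mul_pos_right hj (hw j)
  have hsum : 0 < ∑ i, w i * c i ^ t :=
    Finset.sum_pos' (fun i _ => mul_nonneg (hw i) (Real.rpow_nonneg (hc i) t))
      ⟨j, mem_univ j, mul_pos hwj (Real.rpow_pos_of_pos hcj t)⟩
  have hW : 0 < ∑ i, w i := hwj.trans_le (single_le_sum (fun i _ => hw i) (mem_univ j))
  calc Real.log (∑ i, w i * c i ^ t)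
      ≤ Real.log ((∑ i, w i) * c j ^ t) :=
        Real.log_le_log hsum (sum_mul_rpow_le_sum_mul_rpow hw hc hmax ht)
    _ = Real.log (∑ i, w i) + t * Real.log (c j) := by
        rw [Real.log_mul hW.ne' (Real.rpow_pos_of_pos hcj t).ne', Real.log_rpow hcj]

theorem le_log_sum_mul_rpow (hw : ∀ i, 0 ≤ w i) (hc : ∀ i, 0 ≤ c i) (hj : 0 < w j * c j) :
    Real.log (w j) + t * Real.log (c j) ≤ Real.log (∑ i, w i * c i ^ t) := by
  have hwj := pos_of_mul_pos_left hj (hc j)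
  have hcj := pos_of_mul_pos_right hj (hw j)
  have hterm : 0 < w j * c j ^ t := mul_pos hwj (Real.rpow_pos_of_pos hcj t)
  calc Real.log (w j) + t * Real.log (c j) = Real.log (w j * c j ^ t) := by
        rw [Real.log_mul hwj.ne' (Real.rpow_pos_of_pos hcj t).ne', Real.log_rpow hcj]
    _ ≤ Real.log (∑ i, w i * c i ^ t) :=
        Real.log_le_log hterm (single_le_sum (f := fun i => w i * c i ^ t)
          (fun i _ => mul_nonneg (hw i) (Real.rpow_nonneg (hc i) t)) (mem_univ j))

theorem tendsto_log_sum_mul_rpow_two_mul_div (hw : ∀ i, 0 ≤ w i) (hc : ∀ i, 0 ≤ c i)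
    (hj : 0 < w j * c j) (hmax : ∀ i, 0 < w i * c i → c i ≤ c j) :
    Tendsto (fun z : ℝ => Real.log (∑ i, w i * c i ^ (2 * z)) / (z + 1)) atTop
      (𝓝 (Real.log (c j ^ 2))) := by
  have hrw (z : ℝ) : 2 * z * Real.log (c j) = z * Real.log (c j ^ 2) := by
    rw [Real.log_pow]; push_cast; ring
  refine tendsto_div_add_one_of_le_add_mul (a := Real.log (w j)) (b := Real.log (∑ i, w i)) ?_ ?_
  · exact Eventually.of_forall fun z => hrw z ▸ le_log_sum_mul_rpow hw hc hj
  · filter_upwards [eventually_gt_atTop 0] with z hz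
    exact hrw z ▸ log_sum_mul_rpow_le hw hc hj hmax (by positivity)

end LogSumRpow

theorem tropical_limit_of_alpha_z_general
    {n : ℕ} (α : ℝ)
    (p q c : Fin n → ℝ)
    (hp : ∀ i, 0 ≤ p i) (hq : ∀ i, 0 ≤ q i)
    (hc : ∀ i, c i ∈ Set.Icc (0 : ℝ) 1)
    (hex : ∃ i, 0 < p i ∧ 0 < q i ∧ 0 < c i) :
    Tendsto
      (fun z : ℝ =>
        -(1 / (z + 1)) * Real.log (∑ i, p i ^ α * q i ^ (1 - α) * c i ^ (2 * z)))
      atTop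
      (nhds (-Real.log (⨆ i ∈ {i : Fin n | 0 < p i ^ α * q i ^ (1 - α) * c i}, (c i) ^ 2))) := by
  set w : Fin n → ℝ := fun i => p i ^ α * q i ^ (1 - α)
  have hw i : 0 ≤ w i := mul_nonneg (Real.rpow_nonneg (hp i) _) (Real.rpow_nonneg (hq i) _)
  have hc₀ i : 0 ≤ c i := (hc i).1
  obtain ⟨i₀, hp₀, hq₀, hci₀⟩ := hex
  have hsupp : (univ.filter fun i => 0 < w i * c i).Nonempty :=
    ⟨i₀, by simpa using mul_pos (mul_pos (Real.rpow_pos_of_pos hp₀ _) (Real.rpow_pos_of_pos hq₀ _)) hci₀⟩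
  obtain ⟨j, hj, hmax⟩ := exists_max_image _ c hsupp
  simp only [mem_filter, mem_univ, true_and] at hj hmax
  have hsup : ⨆ i ∈ {i : Fin n | 0 < w i * c i}, c i ^ 2 = c j ^ 2 :=
    Real.biSup_eq_of_forall_le hj (fun i hi => pow_le_pow_left₀ (hc₀ i) (hmax i hi) 2) (sq_nonneg _)
  rw [hsup]
  simpa [neg_div, div_eq_inv_mul] using (tendsto_log_sum_mul_rpow_two_mul_div hw hc₀ hj hmax).neg

/-- The tropical relative entropy `D̂^T` is the pointwise limit `z → ∞` of the
`α`-`z` relative entropies `D̂_{α,z}` on pairs of cq-states with pure components. -/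
theorem tropical_limit_of_alpha_z
    {n : ℕ} (α : ℝ) (hα : α ∈ Set.Icc (0 : ℝ) 1)
    (p q c : Fin n → ℝ)
    (hp : ∀ i, 0 ≤ p i) (hq : ∀ i, 0 ≤ q i)
    (hpsum : ∑ i, p i = 1) (hqsum : ∑ i, q i = 1)
    (hc : ∀ i, c i ∈ Set.Icc (0 : ℝ) 1)
    (hex : ∃ i, 0 < p i ∧ 0 < q i ∧ 0 < c i) :
    Tendsto
      (fun z : ℝ =>
        -(1 / (z + 1)) * Real.log (∑ i, p i ^ α * q i ^ (1 - α) * c i ^ (2 * z)))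
      atTop
      (nhds (-Real.log (⨆ i ∈ {i : Fin n | 0 < p i ^ α * q i ^ (1 - α) * c i}, (c i) ^ 2))) :=
  tropical_limit_of_alpha_z_general α p q c hp hq hc hex
end

section
/- Let α ∈ (0,1) and z ≥ 0, and suppose that for all θ ∈ (0, π/2) the inequality (cos(θ − π/4))^{2z} ≤ 2^{−α}((cos θ)^{2−2α} + (sin θ)^{2−2α}) holds. Then z ≥ α. -/
open Real

theorem Real.cos_pi_div_four_rpow_two_mul (z : ℝ) : cos (π / 4) ^ (2 * z) = 2 ^ (-z) := by
  have hsq : cos (π / 4) ^ (2 : ℝ) = 2⁻¹ := by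
    rw [rpow_two, cos_pi_div_four, div_pow, sq_sqrt zero_le_two]
    norm_num
  rw [rpow_mul (by rw [cos_pi_div_four]; positivity), hsq, inv_rpow zero_le_two, rpow_neg zero_le_two]

theorem constraint_z_ge_alpha_general
    (α z : ℝ) (hα : α ∈ Set.Ioo (0 : ℝ) 1)
    (h : ∀ θ ∈ Set.Ioo (0 : ℝ) (π / 2),
      (Real.cos (θ - π / 4)) ^ (2 * z) ≤
        (2 : ℝ) ^ (-α) * ((Real.cos θ) ^ (2 - 2 * α) + (Real.sin θ) ^ (2 - 2 * α))) :
    α ≤ z := by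
  have hexp : 0 < 2 - 2 * α := by linarith [hα.2]
  have hcos : cos (π / 2 - π / 4) = cos (π / 4) := by ring_nf
  have hmem : π / 2 ∈ closure (Set.Ioo 0 (π / 2)) := by
    rw [closure_Ioo (by positivity)]
    exact Set.right_mem_Icc.2 (by positivity)
  have hlhs : ContinuousAt (fun θ ↦ cos (θ - π / 4) ^ (2 * z)) (π / 2) :=
    (continuous_cos.comp (continuous_sub_right _)).continuousAt.rpow_const
      (Or.inl (show cos (π / 2 - π / 4) ≠ 0 by rw [hcos, cos_pi_div_four]; positivity))
  have hrhs : ContinuousAt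
      (fun θ ↦ (2 : ℝ) ^ (-α) * (cos θ ^ (2 - 2 * α) + sin θ ^ (2 - 2 * α))) (π / 2) :=
    ((continuous_cos.continuousAt.rpow_const (Or.inr hexp.le)).add
      (continuous_sin.continuousAt.rpow_const (Or.inr hexp.le))).const_mul _
  -- Let `θ → π/2`: the left side tends to `2^(-z)`, the right side to `2^(-α)`.
  have hlim := ContinuousWithinAt.closure_le hmem hlhs.continuousWithinAt
    hrhs.continuousWithinAt h
  rw [hcos, cos_pi_div_four_rpow_two_mul, cos_pi_div_two, sin_pi_div_two, zero_rpow hexp.ne',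
    one_rpow, zero_add, mul_one] at hlim
  linarith [(rpow_le_rpow_left_iff one_lt_two).1 hlim]

/-- Monotonicity constraint from the measurement channel forces `z ≥ α`. -/
theorem constraint_z_ge_alpha
    (α z : ℝ) (hα : α ∈ Set.Ioo (0 : ℝ) 1) (hz : 0 ≤ z)
    (h : ∀ θ ∈ Set.Ioo (0 : ℝ) (π / 2),
      (Real.cos (θ - π / 4)) ^ (2 * z) ≤
        (2 : ℝ) ^ (-α) * ((Real.cos θ) ^ (2 - 2 * α) + (Real.sin θ) ^ (2 - 2 * α))) :
    α ≤ z :=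
  constraint_z_ge_alpha_general α z hα h
end

section
/- Let β > 0 and z ≤ 0. Then it is NOT the case that for all θ ∈ [π/4, π/2): (cos(θ − π/4))^{2z} ≥ 2^{−β} (cos θ)^{−2β}. That is, there exists θ ∈ [π/4, π/2) violating this inequality. -/
open Real

/-!
For `θ ∈ [π/4, π/2)` the angle `θ - π/4` lies in `[0, π/4]`, so `cos (θ - π/4) ≥ √2/2` and, the
exponent `2z` being nonpositive, the left side is at most `(√2/2) ^ (2z) = 2 ^ (-z)`. The right side
`2 ^ (-β) (cos θ) ^ (-2β)` tends to `+∞` as `θ → π/2⁻` because `β > 0`, so it eventually exceeds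
this bound.
-/

open Filter Topology

namespace Real

lemma sqrt_two_div_two_le_cos {x : ℝ} (hx : |x| ≤ π / 4) : √2 / 2 ≤ cos x := by
  rw [← cos_abs x, ← cos_pi_div_four]
  exact cos_le_cos_of_nonneg_of_le_pi (abs_nonneg x) (by linarith [pi_pos]) hx

lemma sqrt_two_div_two_rpow_two_mul (z : ℝ) : (√2 / 2) ^ (2 * z) = 2 ^ (-z) := by
  have hsq : (√2 / 2) ^ (2 : ℝ) = 2⁻¹ := by
    rw [rpow_two, div_pow, sq_sqrt zero_le_two]
    norm_num
  rw [rpow_mul (by positivity), hsq, inv_rpow zero_le_two, rpow_neg zero_le_two]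

lemma cos_rpow_two_mul_le_two_rpow_neg {x z : ℝ} (hx : |x| ≤ π / 4) (hz : z ≤ 0) :
    cos x ^ (2 * z) ≤ 2 ^ (-z) := by
  rw [← sqrt_two_div_two_rpow_two_mul]
  exact rpow_le_rpow_of_nonpos (by positivity) (sqrt_two_div_two_le_cos hx) (by linarith)

lemma tendsto_cos_rpow_pi_div_two {y : ℝ} (hy : y < 0) :
    Tendsto (fun θ ↦ cos θ ^ y) (𝓝[<] (π / 2)) atTop :=
  (tendsto_rpow_neg_nhdsGT_zero hy).comp tendsto_cos_pi_div_two

end Real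

/-- For `β > 0` and `z ≤ 0` the tropical monotonicity inequality fails for some angle,
ruling out tropical-real-valued nondegenerate monotone homomorphisms with `β > 0`. -/
theorem no_tropical_homomorphism_beta_pos
    (β z : ℝ) (hβ : 0 < β) (hz : z ≤ 0) :
    ∃ θ ∈ Set.Ico (π / 4) (π / 2),
      (Real.cos (θ - π / 4)) ^ (2 * z) <
        (2 : ℝ) ^ (-β) * (Real.cos θ) ^ (-(2 * β)) := by
  have hrhs : Tendsto (fun θ ↦ (2 : ℝ) ^ (-β) * cos θ ^ (-(2 * β))) (𝓝[<] (π / 2)) atTop :=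
    (tendsto_cos_rpow_pi_div_two (by linarith)).const_mul_atTop (by positivity)
  obtain ⟨θ, hbig, hθ⟩ := ((hrhs.eventually_gt_atTop ((2 : ℝ) ^ (-z))).and
    (Ioo_mem_nhdsLT (by linarith [pi_pos] : π / 4 < π / 2))).exists
  refine ⟨θ, Set.Ioo_subset_Ico_self hθ, ?_⟩
  have hangle : |θ - π / 4| ≤ π / 4 := abs_le.2 ⟨by linarith [hθ.1], by linarith [hθ.2]⟩
  exact (cos_rpow_two_mul_le_two_rpow_neg hangle hz).trans_lt hbig
end

section
/- Let |α⟩, |β⟩ be unit vectors in a Hilbert space with F := |⟨α|β⟩|² < 1, let (p'_i)_{i=1}^{n'} and (q'_i)_{i=1}^{n'} be probability vectors with all entries strictly positive, and let m ∈ ℕ be such that F^m p'_i < q'_i for all i. Define E^m_i := p'_i |α⟩⟨α|^{⊗m} + ((q'_i − F^m p'_i)/(1 − F^m)) |α_m^⊥⟩⟨α_m^⊥|, where |α_m^⊥⟩ is a unit vector in span{|α⟩^{⊗m}, |β⟩^{⊗m}} orthogonal to |α⟩^{⊗m}. Then (E^m_i)_{i=1}^{n'} is a POVM (each E^m_i is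 positive semidefinite and Σ_i E^m_i is the identity on that 2-dimensional span), and ⟨α^{⊗m}|E^m_i|α^{⊗m}⟩ = p'_i while ⟨β^{⊗m}|E^m_i|β^{⊗m}⟩ = q'_i. -/
/-!
On the plane spanned by `aM` and `bM`, the vectors `aM`, `aPerp` form an orthonormal basis, and
`E i = p i |aM⟩⟨aM| + c i |aPerp⟩⟨aPerp|` is diagonal in it, with
`c i = (q i - F^m p i) / (1 - F^m)`. Since `∑ p = ∑ c = 1`, the `E i` sum to the identity there.
As `|⟨aM|bM⟩|² = F^m`, Parseval gives `|⟨aPerp|bM⟩|² = 1 - F^m`, so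
`⟨bM|E i|bM⟩ = p i F^m + c i (1 - F^m) = q i`. The weights `c i` are nonnegative because summing
`F^m p i < q i` over `i` gives `F^m < 1`.
-/

open Finset InnerProductSpace

section WeightedProj

variable {H : Type*} [NormedAddCommGroup H] [InnerProductSpace ℂ H]

noncomputable def weightedProj (s t : ℝ) (u w : H) : H →L[ℂ] H :=
  (s : ℂ) • rankOne ℂ u u + (t : ℂ) • rankOne ℂ w w

lemma weightedProj_apply (s t : ℝ) (u w v : H) :
    weightedProj s t u w v = (s : ℂ) • (⟪u, v⟫_ℂ • u) + (t : ℂ) • (⟪w, v⟫_ℂ • w) :=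
  rfl

lemma inner_self_weightedProj (s t : ℝ) (u w v : H) :
    ⟪v, weightedProj s t u w v⟫_ℂ = ((s * ‖⟪u, v⟫_ℂ‖ ^ 2 + t * ‖⟪w, v⟫_ℂ‖ ^ 2 : ℝ) : ℂ) := by
  simp only [weightedProj_apply, inner_add_right, inner_smul_right, ← inner_conj_symm v u,
    ← inner_conj_symm v w, Complex.mul_conj']
  push_cast
  ring

lemma sum_weightedProj {ι : Type*} (S : Finset ι) (s t : ι → ℝ) (u w : H) :
    ∑ i ∈ S, weightedProj (s i) (t i) u w =
      weightedProj (∑ i ∈ S, s i) (∑ i ∈ S, t i) u w := by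
  simp only [weightedProj, sum_add_distrib, ← sum_smul, Complex.ofReal_sum]

lemma weightedProj_one_one_apply_of_mem_span {u w v : H} (hu : ‖u‖ = 1) (hw : ‖w‖ = 1)
    (huw : ⟪u, w⟫_ℂ = 0) (hv : v ∈ Submodule.span ℂ {u, w}) :
    weightedProj 1 1 u w v = v := by
  have hwu : ⟪w, u⟫_ℂ = 0 := inner_eq_zero_symm.mp huw
  have hfix : Set.EqOn (weightedProj 1 1 u w).toLinearMap (LinearMap.id (R := ℂ)) {u, w} := by
    rintro x (rfl | rfl) <;>
      simp [weightedProj_apply, inner_self_eq_norm_sq_to_K, hu, hw, huw, hwu]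
  exact LinearMap.eqOn_span' hfix hv

lemma norm_sq_eq_of_mem_span_pair {u w v : H} (hu : ‖u‖ = 1) (hw : ‖w‖ = 1)
    (huw : ⟪u, w⟫_ℂ = 0) (hv : v ∈ Submodule.span ℂ {u, w}) :
    ‖v‖ ^ 2 = ‖⟪u, v⟫_ℂ‖ ^ 2 + ‖⟪w, v⟫_ℂ‖ ^ 2 := by
  have h := inner_self_weightedProj 1 1 u w v
  rw [weightedProj_one_one_apply_of_mem_span hu hw huw hv, inner_self_eq_norm_sq_to_K] at h
  exact Complex.ofReal_injective (by simpa using h)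

lemma span_pair_le_span_pair_of_inner_eq_zero {u w b : H} (huw : ⟪u, w⟫_ℂ = 0) (hw : w ≠ 0)
    (hwb : w ∈ Submodule.span ℂ {u, b}) :
    Submodule.span ℂ {u, b} ≤ Submodule.span ℂ {u, w} := by
  have hw_notMem : w ∉ Submodule.span ℂ {u} := fun hmem =>
    hw (Submodule.disjoint_def.mp (Submodule.orthogonal_disjoint _) w hmem
      (Submodule.mem_orthogonal_singleton_iff_inner_right.mpr huw))
  rw [Set.pair_comm] at hwb
  rw [Submodule.span_le, Set.insert_subset_iff, Set.singleton_subset_iff, Set.pair_comm u w]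
  exact ⟨Submodule.subset_span (by simp), mem_span_insert_exchange hwb hw_notMem⟩

end WeightedProj

section Weights

variable {ι : Type*} [Fintype ι] {p q : ι → ℝ} {r : ℝ}

lemma lt_one_of_forall_mul_lt (hp : ∑ i, p i = 1) (hq : ∑ i, q i = 1)
    (h : ∀ i, r * p i < q i) : r < 1 := by
  have hι : (univ : Finset ι).Nonempty := by
    by_contra hempty
    simp [not_nonempty_iff_eq_empty.mp hempty] at hp
  calc r = ∑ i, r * p i := by rw [← mul_sum, hp, mul_one]
    _ < ∑ i, q i := sum_lt_sum_of_nonempty hι fun i _ => h i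
    _ = 1 := hq

lemma sum_sub_mul_div_one_sub (hp : ∑ i, p i = 1) (hq : ∑ i, q i = 1) (hr : r ≠ 1) :
    ∑ i, (q i - r * p i) / (1 - r) = 1 := by
  rw [← sum_div, sum_sub_distrib, ← mul_sum, hp, hq, mul_one,
    div_self (sub_ne_zero.mpr hr.symm)]

end Weights

theorem povm_construction_general
    {H : Type*} [NormedAddCommGroup H] [InnerProductSpace ℂ H]
    (a b aM bM aPerp : H) (m : ℕ) {n' : ℕ}
    (p q : Fin n' → ℝ)
    (haM : ‖aM‖ = 1) (hbM : ‖bM‖ = 1)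
    (haP : ‖aPerp‖ = 1)
    (hover : (inner ℂ aM bM : ℂ) = (inner ℂ a b : ℂ) ^ m)
    (hperp : (inner ℂ aM aPerp : ℂ) = 0)
    (hspan : aPerp ∈ Submodule.span ℂ ({aM, bM} : Set H))
    (F : ℝ) (hF : F = ‖(inner ℂ a b : ℂ)‖ ^ 2)
    (hp : ∀ i, 0 < p i)
    (hpsum : ∑ i, p i = 1) (hqsum : ∑ i, q i = 1)
    (hm : ∀ i, F ^ m * p i < q i)
    (E : Fin n' → H → H)
    (hE : ∀ i v, E i v =
      ((p i : ℂ)) • ((inner ℂ aM v : ℂ) • aM) +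
      (((q i - F ^ m * p i) / (1 - F ^ m) : ℝ) : ℂ) • ((inner ℂ aPerp v : ℂ) • aPerp)) :
    (∀ i, ∀ v : H, 0 ≤ (inner ℂ v (E i v) : ℂ).re ∧ (inner ℂ v (E i v) : ℂ).im = 0) ∧
    (∀ v ∈ Submodule.span ℂ ({aM, bM} : Set H), (∑ i, E i v) = v) ∧
    (∀ i, (inner ℂ aM (E i aM) : ℂ) = ((p i : ℝ) : ℂ)) ∧
    (∀ i, (inner ℂ bM (E i bM) : ℂ) = ((q i : ℝ) : ℂ)) := by
  have hFm : F ^ m < 1 := lt_one_of_forall_mul_lt hpsum hqsum hm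
  set c : Fin n' → ℝ := fun i => (q i - F ^ m * p i) / (1 - F ^ m)
  have hE' : ∀ i, E i = weightedProj (p i) (c i) aM aPerp := fun i => funext (hE i)
  have hplane := span_pair_le_span_pair_of_inner_eq_zero hperp
    (ne_zero_of_norm_ne_zero (haP ▸ one_ne_zero)) hspan
  have hbM_aM : ‖⟪aM, bM⟫_ℂ‖ ^ 2 = F ^ m := by rw [hover, norm_pow, hF, pow_right_comm]
  have hbM_aPerp : ‖⟪aPerp, bM⟫_ℂ‖ ^ 2 = 1 - F ^ m := by
    have hbM_mem : bM ∈ Submodule.span ℂ {aM, aPerp} :=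
      hplane (Submodule.subset_span (Set.mem_insert_of_mem _ rfl))
    have := norm_sq_eq_of_mem_span_pair haM haP hperp hbM_mem
    rw [hbM, hbM_aM] at this
    linarith
  refine ⟨fun i v => ?_, fun v hv => ?_, fun i => ?_, fun i => ?_⟩
  · have hc : 0 ≤ c i := div_nonneg (sub_nonneg.mpr (hm i).le) (sub_nonneg.mpr hFm.le)
    rw [hE', inner_self_weightedProj, Complex.ofReal_re, Complex.ofReal_im]
    exact ⟨add_nonneg (mul_nonneg (hp i).le (sq_nonneg _)) (mul_nonneg hc (sq_nonneg _)), rfl⟩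
  · simp only [hE', ← _root_.sum_apply, sum_weightedProj, hpsum,
      sum_sub_mul_div_one_sub hpsum hqsum hFm.ne, c]
    exact weightedProj_one_one_apply_of_mem_span haM haP hperp (hplane hv)
  · simp [hE', inner_self_weightedProj, inner_eq_zero_symm.mp hperp, inner_self_eq_norm_sq_to_K,
      haM]
  · rw [hE', inner_self_weightedProj, hbM_aM, hbM_aPerp]
    congr 1
    simp only [c]
    field_simp [(sub_pos.mpr hFm).ne']
    ring

/-- The POVM construction in the power universality proof. Here `aM`, `bM`
stand for `|α⟩^{⊗m}`, `|β⟩^{⊗m}` (so `⟨aM|bM⟩ = ⟨α|β⟩^m`), and `aPerp` is a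
unit vector in their span orthogonal to `aM`. The operators
`E i = p'_i |aM⟩⟨aM| + ((q'_i − F^m p'_i)/(1 − F^m)) |aPerp⟩⟨aPerp|` form a
POVM on the 2-dimensional span with `⟨aM|E i|aM⟩ = p'_i`, `⟨bM|E i|bM⟩ = q'_i`. -/
theorem povm_construction
    {H : Type*} [NormedAddCommGroup H] [InnerProductSpace ℂ H]
    (a b aM bM aPerp : H) (m : ℕ) {n' : ℕ}
    (p q : Fin n' → ℝ)
    (ha : ‖a‖ = 1) (hb : ‖b‖ = 1) (haM : ‖aM‖ = 1) (hbM : ‖bM‖ = 1)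
    (haP : ‖aPerp‖ = 1)
    (hover : (inner ℂ aM bM : ℂ) = (inner ℂ a b : ℂ) ^ m)
    (hperp : (inner ℂ aM aPerp : ℂ) = 0)
    (hspan : aPerp ∈ Submodule.span ℂ ({aM, bM} : Set H))
    (F : ℝ) (hF : F = ‖(inner ℂ a b : ℂ)‖ ^ 2) (hF1 : F < 1)
    (hp : ∀ i, 0 < p i) (hq : ∀ i, 0 < q i)
    (hpsum : ∑ i, p i = 1) (hqsum : ∑ i, q i = 1)
    (hm : ∀ i, F ^ m * p i < q i)
    (E : Fin n' → H → H)
    (hE : ∀ i v, E i v =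
      ((p i : ℂ)) • ((inner ℂ aM v : ℂ) • aM) +
      (((q i - F ^ m * p i) / (1 - F ^ m) : ℝ) : ℂ) • ((inner ℂ aPerp v : ℂ) • aPerp)) :
    (∀ i, ∀ v : H, 0 ≤ (inner ℂ v (E i v) : ℂ).re ∧ (inner ℂ v (E i v) : ℂ).im = 0) ∧
    (∀ v ∈ Submodule.span ℂ ({aM, bM} : Set H), (∑ i, E i v) = v) ∧
    (∀ i, (inner ℂ aM (E i aM) : ℂ) = ((p i : ℝ) : ℂ)) ∧
    (∀ i, (inner ℂ bM (E i bM) : ℂ) = ((q i : ℝ) : ℂ)) :=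
  povm_construction_general a b aM bM aPerp m p q haM hbM haP hover hperp hspan F hF hp hpsum hqsum
    hm E hE
end

section
/- Let S be a preordered semiring, let x, y ∈ S, and suppose x^n ⪰ y^n for some n ∈ ℕ, n ≥ 1. Then with a := Σ_{ℓ=0}^{n−1} x^ℓ y^{n−1−ℓ}, one has a·x ⪰ a·y. In particular, large-sample ordering x^n ⪰ y^n implies catalytic ordering with catalyst a. -/
open Finset

/-!
Both `a * y` and `a * x` telescope to a pure power plus the same sum
`∑_{ℓ<n-1} x^(ℓ+1) y^(n-1-ℓ)`: multiplying by `y` adds `yⁿ` as the term `ℓ = 0`, multiplying by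
`x` adds `xⁿ` as the term `ℓ = n - 1`. Adding that common sum to `yⁿ ≤ xⁿ` gives `a * y ≤ a * x`.
-/

section Telescoping

variable {S : Type*} [CommSemiring S] (x y : S) (m : ℕ)

theorem geom_sum₂_succ_mul_right :
    (∑ ℓ ∈ range (m + 1), x ^ ℓ * y ^ (m - ℓ)) * y =
      y ^ (m + 1) + ∑ ℓ ∈ range m, x ^ (ℓ + 1) * y ^ (m - ℓ) := by
  rw [sum_mul, sum_range_succ', add_comm, pow_zero, one_mul, Nat.sub_zero, ← pow_succ]
  congr 1
  refine sum_congr rfl fun ℓ hℓ => ?_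
  rw [mul_assoc, ← pow_succ, Nat.sub_add_eq, Nat.sub_add_cancel (Nat.sub_pos_of_lt (mem_range.mp hℓ))]

theorem geom_sum₂_succ_mul_left :
    (∑ ℓ ∈ range (m + 1), x ^ ℓ * y ^ (m - ℓ)) * x =
      x ^ (m + 1) + ∑ ℓ ∈ range m, x ^ (ℓ + 1) * y ^ (m - ℓ) := by
  rw [sum_mul, sum_range_succ, add_comm, Nat.sub_self, pow_zero, mul_one, ← pow_succ]
  congr 1
  exact sum_congr rfl fun ℓ _ => by ring

end Telescoping

theorem large_sample_implies_catalytic_general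
    {S : Type*} [CommSemiring S] [Preorder S]
    (addLe : ∀ (a x y : S), x ≤ y → x + a ≤ y + a)
    (x y : S) (n : ℕ) (h : y ^ n ≤ x ^ n) :
    (∑ ℓ ∈ Finset.range n, x ^ ℓ * y ^ (n - 1 - ℓ)) * y ≤
      (∑ ℓ ∈ Finset.range n, x ^ ℓ * y ^ (n - 1 - ℓ)) * x := by
  cases n with
  | zero => simp
  | succ m =>
    simp only [Nat.add_sub_cancel]
    rw [geom_sum₂_succ_mul_right, geom_sum₂_succ_mul_left]
    exact addLe _ _ _ h

/-- In a preordered (commutative) semiring, large-sample ordering `xⁿ ⪰ yⁿ`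
implies catalytic ordering with catalyst `a = Σ_{ℓ=0}^{n-1} x^ℓ y^{n-1-ℓ}`. -/
theorem large_sample_implies_catalytic
    {S : Type*} [CommSemiring S] [Preorder S]
    (addLe : ∀ (a x y : S), x ≤ y → x + a ≤ y + a)
    (mulLe : ∀ (a x y : S), x ≤ y → x * a ≤ y * a)
    (x y : S) (n : ℕ) (hn : 1 ≤ n) (h : y ^ n ≤ x ^ n) :
    (∑ ℓ ∈ Finset.range n, x ^ ℓ * y ^ (n - 1 - ℓ)) * y ≤
      (∑ ℓ ∈ Finset.range n, x ^ ℓ * y ^ (n - 1 - ℓ)) * x :=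
  large_sample_implies_catalytic_general addLe x y n h
end

section
/- Let P and Q be orthogonal projections on a finite-dimensional complex Hilbert space ℋ. Then ℋ decomposes as an orthogonal direct sum ℋ = ⊕_{i=1}^n ℋ_i of P-invariant and Q-invariant subspaces, each of dimension at most 2, such that the restrictions P|_{ℋ_i} and Q|_{ℋ_i} are projections of rank at most 1, and in particular the restrictions to 2-dimensional ℋ_i have rank exactly 1. -/
/-!
If `W` is invariant under `P` and `Q` and `u ∈ W ∩ range P` is an eigenvector of `P Q P`, then
`P u = u` and `P Q u ∈ ℂ u`, so `span {u, Q u} ⊆ W` is invariant, `P` maps it onto `ℂ u` and `Q`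
onto `ℂ (Q u)`: a block of dimension at most 2 on which both projections have rank at most 1, and
rank exactly 1 when the block is 2-dimensional. If `W ∩ range P = 0`, any eigenvector of `Q` in
`W` spans a 1-dimensional block. As `P` and `Q` are self-adjoint, the orthogonal complement of a
block inside `W` is again invariant, so induction on `dim W` splits the space into orthogonal
blocks.
-/

open Module Submodule

section JordanBlock

variable {K E : Type*} [Field K] [AddCommGroup E] [Module K E]

structure IsJordanBlock (P Q : Module.End K E) (V : Submodule K E) : Prop where
  finrank_le_two : finrank K V ≤ 2
  mem_invtSubmodule_fst : V ∈ P.invtSubmodule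
  mem_invtSubmodule_snd : V ∈ Q.invtSubmodule
  finrank_map_fst_le_one : finrank K (V.map P) ≤ 1
  finrank_map_snd_le_one : finrank K (V.map Q) ≤ 1
  finrank_map_eq_one : finrank K V = 2 → finrank K (V.map P) = 1 ∧ finrank K (V.map Q) = 1

lemma finrank_span_singleton_le_one (u : E) : finrank K (K ∙ u) ≤ 1 :=
  (finrank_span_le_card {u}).trans (by simp)

lemma map_span_singleton (f : Module.End K E) (u : E) : (K ∙ u).map f = K ∙ f u := by
  rw [map_span, Set.image_singleton]

lemma isJordanBlock_span_singleton {P Q : Module.End K E} {u : E}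
    (hPu : P u ∈ K ∙ u) (hQu : Q u ∈ K ∙ u) : IsJordanBlock P Q (K ∙ u) where
  finrank_le_two := (finrank_span_singleton_le_one u).trans (by norm_num)
  mem_invtSubmodule_fst := by
    rwa [End.mem_invtSubmodule_iff_map_le, map_span_singleton, span_singleton_le_iff_mem]
  mem_invtSubmodule_snd := by
    rwa [End.mem_invtSubmodule_iff_map_le, map_span_singleton, span_singleton_le_iff_mem]
  finrank_map_fst_le_one := by rw [map_span_singleton]; exact finrank_span_singleton_le_one _
  finrank_map_snd_le_one := by rw [map_span_singleton]; exact finrank_span_singleton_le_one _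
  finrank_map_eq_one h := by linarith [finrank_span_singleton_le_one (K := K) u]

lemma isJordanBlock_span_pair {P Q : Module.End K E} (hQ : IsIdempotentElem Q) {u : E}
    (hPu : P u = u) (hPQu : P (Q u) ∈ K ∙ u) : IsJordanBlock P Q (span K {u, Q u}) := by
  have hQQu : Q (Q u) = Q u := congr($hQ u)
  have hV : span K {u, Q u} = (K ∙ u) ⊔ (K ∙ Q u) := span_insert _ _
  have hmapP : (span K {u, Q u}).map P = K ∙ u := by
    rw [map_span, Set.image_pair, hPu, Set.pair_comm, span_insert_eq_span hPQu]
  have hmapQ : (span K {u, Q u}).map Q = K ∙ Q u := by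
    rw [map_span, Set.image_pair, hQQu, Set.pair_eq_singleton]
  have hfinrank : finrank K (span K {u, Q u}) ≤ finrank K (K ∙ u) + finrank K (K ∙ Q u) :=
    hV ▸ finrank_add_le_finrank_add_finrank _ _
  have hu := finrank_span_singleton_le_one (K := K) u
  have hQu := finrank_span_singleton_le_one (K := K) (Q u)
  refine ⟨by omega, ?_, ?_, ?_, ?_, fun h ↦ ?_⟩
  · rw [End.mem_invtSubmodule_iff_map_le, hmapP, hV]
    exact le_sup_left
  · rw [End.mem_invtSubmodule_iff_map_le, hmapQ, hV]
    exact le_sup_right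
  · rwa [hmapP]
  · rwa [hmapQ]
  · rw [hmapP, hmapQ]
    omega

end JordanBlock

section AlgClosed

variable {K E : Type*} [Field K] [IsAlgClosed K] [AddCommGroup E] [Module K E]
  [FiniteDimensional K E]

lemma Module.End.exists_hasEigenvector_mem_of_mem_invtSubmodule {T : Module.End K E}
    {W : Submodule K E} (hW : W ≠ ⊥) (hTW : W ∈ T.invtSubmodule) :
    ∃ u ∈ W, ∃ μ, T.HasEigenvector μ u := by
  have : Nontrivial W := nontrivial_iff_ne_bot.mpr hW
  obtain ⟨μ, hμ⟩ := End.exists_eigenvalue (T.restrict hTW)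
  obtain ⟨v, hv⟩ := hμ.exists_hasEigenvector
  refine ⟨v, v.2, μ, ?_, by simpa using hv.2⟩
  rw [End.mem_eigenspace_iff]
  exact congr($hv.apply_eq_smul)

lemma exists_isJordanBlock_le {P Q : Module.End K E} (hP : IsIdempotentElem P)
    (hQ : IsIdempotentElem Q) {W : Submodule K E} (hW : W ≠ ⊥) (hPW : W ∈ P.invtSubmodule)
    (hQW : W ∈ Q.invtSubmodule) : ∃ V ≤ W, V ≠ ⊥ ∧ IsJordanBlock P Q V := by
  by_cases hR : W ⊓ LinearMap.range P = ⊥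
  · obtain ⟨u, huW, μ, hu⟩ := Module.End.exists_hasEigenvector_mem_of_mem_invtSubmodule hW hQW
    have hPu : P u = 0 := by
      simpa [hR] using (mem_inf.mpr ⟨hPW huW, LinearMap.mem_range_self P u⟩ :
        P u ∈ W ⊓ LinearMap.range P)
    refine ⟨K ∙ u, (span_singleton_le_iff_mem u W).mpr huW, by simpa using hu.2,
      isJordanBlock_span_singleton (by simp [hPu]) ?_⟩
    rw [hu.apply_eq_smul]
    exact smul_mem _ _ (mem_span_singleton_self u)
  · have hRinv : W ⊓ LinearMap.range P ∈ End.invtSubmodule (P ∘ₗ Q ∘ₗ P) :=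
      End.invtSubmodule.inf_mem (End.invtSubmodule.comp _ hPW
        (End.invtSubmodule.comp _ hQW hPW)) fun _ _ ↦ LinearMap.mem_range_self P _
    obtain ⟨u, ⟨huW, huP⟩, μ, hu⟩ :=
      Module.End.exists_hasEigenvector_mem_of_mem_invtSubmodule hR hRinv
    have hPu : P u = u := (LinearMap.IsIdempotentElem.mem_range_iff hP).mp huP
    have hPQu : P (Q u) = μ • u := by
      simpa [hPu] using hu.apply_eq_smul
    refine ⟨span K {u, Q u}, span_le.mpr (Set.pair_subset huW (hQW huW)),
      (Submodule.ne_bot_iff _).mpr ⟨u, subset_span (by simp), hu.2⟩,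
      isJordanBlock_span_pair hQ hPu ?_⟩
    rw [hPQu]
    exact smul_mem _ _ (mem_span_singleton_self u)

end AlgClosed

section InnerProductSpace

variable {H : Type*} [NormedAddCommGroup H] [InnerProductSpace ℂ H] [FiniteDimensional ℂ H]

theorem exists_orthogonal_isJordanBlock_sSup_eq {P Q : Module.End ℂ H}
    (hP : IsIdempotentElem P) (hQ : IsIdempotentElem Q) (hPs : P.IsSymmetric)
    (hQs : Q.IsSymmetric) (W : Submodule ℂ H) (hPW : W ∈ P.invtSubmodule)
    (hQW : W ∈ Q.invtSubmodule) :
    ∃ S : Set (Submodule ℂ H), S.Finite ∧ S.Pairwise (· ⟂ ·) ∧ sSup S = W ∧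
      ∀ V ∈ S, IsJordanBlock P Q V := by
  induction hn : finrank ℂ W using Nat.strong_induction_on generalizing W with
  | _ n ih =>
  rcases eq_or_ne W ⊥ with rfl | hW
  · exact ⟨∅, Set.finite_empty, Set.pairwise_empty _, sSup_empty, by simp⟩
  obtain ⟨B, hBW, hB, hBblock⟩ := exists_isJordanBlock_le hP hQ hW hPW hQW
  have hfinrank : finrank ℂ B + finrank ℂ ↥(Bᗮ ⊓ W) = finrank ℂ W :=
    finrank_add_inf_finrank_orthogonal hBW
  have hBpos : 0 < finrank ℂ B := finrank_pos_iff.mpr (nontrivial_iff_ne_bot.mpr hB)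
  obtain ⟨S, hSfin, hSorth, hSsup, hSblock⟩ := ih _ (by omega) (Bᗮ ⊓ W)
    (End.invtSubmodule.inf_mem
      (hPs.orthogonalComplement_mem_invtSubmodule hBblock.mem_invtSubmodule_fst) hPW)
    (End.invtSubmodule.inf_mem
      (hQs.orthogonalComplement_mem_invtSubmodule hBblock.mem_invtSubmodule_snd) hQW) rfl
  have hBS : ∀ V ∈ S, B ⟂ V := fun V hV ↦
    (isOrtho_orthogonal_right B).mono_right ((le_sSup hV).trans (hSsup.le.trans inf_le_left))
  refine ⟨insert B S, hSfin.insert B, hSorth.insert fun V hV _ ↦ ⟨hBS V hV, (hBS V hV).symm⟩,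
    ?_, Set.forall_mem_insert.mpr ⟨hBblock, hSblock⟩⟩
  rw [sSup_insert, hSsup, sup_orthogonal_inf_of_hasOrthogonalProjection hBW]

end InnerProductSpace

/-- Jordan's Lemma: two orthogonal projections on a finite-dimensional complex
Hilbert space can be simultaneously block-diagonalized into mutually orthogonal
invariant subspaces of dimension at most 2, on which both projections restrict
to projections of rank at most 1 (of rank exactly 1 on 2-dimensional blocks). -/
theorem jordan_lemma
    {H : Type*} [NormedAddCommGroup H] [InnerProductSpace ℂ H]
    [FiniteDimensional ℂ H]
    (P Q : H →ₗ[ℂ] H)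
    (hP : P ∘ₗ P = P) (hQ : Q ∘ₗ Q = Q)
    (hPsym : ∀ x y : H, (inner ℂ (P x) y : ℂ) = inner ℂ x (P y))
    (hQsym : ∀ x y : H, (inner ℂ (Q x) y : ℂ) = inner ℂ x (Q y)) :
    ∃ (n : ℕ) (V : Fin n → Submodule ℂ H),
      (∀ i j, i ≠ j → ∀ x ∈ V i, ∀ y ∈ V j, (inner ℂ x y : ℂ) = 0) ∧
      (⨆ i, V i) = ⊤ ∧
      (∀ i, Module.finrank ℂ (V i) ≤ 2) ∧
      (∀ i, ∀ x ∈ V i, P x ∈ V i) ∧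
      (∀ i, ∀ x ∈ V i, Q x ∈ V i) ∧
      (∀ i, Module.finrank ℂ (Submodule.map P (V i)) ≤ 1) ∧
      (∀ i, Module.finrank ℂ (Submodule.map Q (V i)) ≤ 1) ∧
      (∀ i, Module.finrank ℂ (V i) = 2 →
        Module.finrank ℂ (Submodule.map P (V i)) = 1 ∧
        Module.finrank ℂ (Submodule.map Q (V i)) = 1) := by
  obtain ⟨S, hSfin, hSorth, hSsup, hSblock⟩ := exists_orthogonal_isJordanBlock_sSup_eq hP hQ
    hPsym hQsym ⊤ (End.invtSubmodule.top_mem P) (End.invtSubmodule.top_mem Q)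
  obtain ⟨n, V, hV⟩ := hSfin.fin_embedding
  have hblock i : IsJordanBlock P Q (V i) := hSblock _ (hV ▸ Set.mem_range_self i)
  refine ⟨n, V, fun i j hij ↦ isOrtho_iff_inner_eq.mp
      (hSorth (hV ▸ Set.mem_range_self i) (hV ▸ Set.mem_range_self j) (V.injective.ne hij)),
    by rw [← sSup_range, hV, hSsup], fun i ↦ (hblock i).finrank_le_two,
    fun i ↦ (hblock i).mem_invtSubmodule_fst, fun i ↦ (hblock i).mem_invtSubmodule_snd,
    fun i ↦ (hblock i).finrank_map_fst_le_one, fun i ↦ (hblock i).finrank_map_snd_le_one,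
    fun i ↦ (hblock i).finrank_map_eq_one⟩
end
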